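/- arXiv:1708.01725 — 6 statements merged into one kernel-verified Lean document; each statement's English description precedes it below -/
import Mathlib

section
/- The cycle graph C_n on n ≥ 4 vertices has two disjoint total dominating sets if and only if n is divisible by 4. -/
open SimpleGraph

/-- A diagonal (chord) of a convex `n`-gon with vertices `0, …, n-1` in cyclic order,
recorded as a pair `(i, j)` with `i < j`, joining two non-adjacent vertices. -/
def IsDiag (n : ℕ) (p : ℕ × ℕ) : Prop :=
  p.1 < p.2 ∧ p.2 < n ∧ 2 ≤ p.2 - p.1 ∧ p.2 - p.1 ≤ n - 2

/-- Two diagonals of a convex polygon cross (in their interiors). -/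
def Crosses (p q : ℕ × ℕ) : Prop :=
  (p.1 < q.1 ∧ q.1 < p.2 ∧ p.2 < q.2) ∨ (q.1 < p.1 ∧ p.1 < q.2 ∧ q.2 < p.2)

/-- A triangulation of a convex `n`-gon: `n - 3` pairwise non-crossing diagonals.
This is the standard combinatorial presentation of a maximal outerplanar graph on
`n` vertices (the polygon boundary is the outer Hamiltonian cycle). -/
structure PolyTriangulation (n : ℕ) where
  diags : Finset (ℕ × ℕ)
  isDiag : ∀ p ∈ diags, IsDiag n p
  noncross : ∀ p ∈ diags, ∀ q ∈ diags, ¬ Crosses p q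
  card_eq : diags.card = n - 3

/-- The maximal outerplanar graph on `Fin n` given by a polygon triangulation:
the boundary Hamiltonian cycle `v_i v_{i+1}` together with the diagonals. -/
def PolyTriangulation.graph {n : ℕ} (T : PolyTriangulation n) : SimpleGraph (Fin n) :=
  SimpleGraph.fromRel (fun i j =>
    (i.val + 1) % n = j.val ∨ (min i.val j.val, max i.val j.val) ∈ T.diags)

/-- `S` is a total dominating set of `G`: every vertex has a neighbor in `S`. -/
def IsTotalDom {V : Type*} (G : SimpleGraph V) (S : Set V) : Prop :=
  ∀ v, ∃ u ∈ S, G.Adj v u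

/-- `G` has two disjoint total dominating sets (total domatic number at least 2). -/
def HasTwoTDS {V : Type*} (G : SimpleGraph V) : Prop :=
  ∃ S₁ S₂ : Set V, Disjoint S₁ S₂ ∧ IsTotalDom G S₁ ∧ IsTotalDom G S₂

/-- The degree of a vertex in the maximal outerplanar graph of a triangulation. -/
noncomputable def pdeg {n : ℕ} (T : PolyTriangulation n) (v : Fin n) : ℕ :=
  (T.graph.neighborSet v).ncard

/-- A central vertex: no degree-2 vertex in its closed neighborhood, and indexing the
vertices cyclically starting from `v`, all neighbors of `v` have pairwise congruent
indices mod 4. -/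
def IsCentral {n : ℕ} (T : PolyTriangulation n) (v : Fin n) : Prop :=
  (∀ u, (u = v ∨ T.graph.Adj v u) → pdeg T u ≠ 2) ∧
  (∀ u w, T.graph.Adj v u → T.graph.Adj v w →
    ((u.val + n - v.val) % n) % 4 = ((w.val + n - v.val) % n) % 4)

/-- A generalized sun graph: a maximal outerplanar graph of order `n ≡ 2 (mod 4)`
in which the number of degree-2 vertices plus central vertices equals `n / 2`. -/
def IsGenSun {n : ℕ} (T : PolyTriangulation n) : Prop :=
  n % 4 = 2 ∧
  ({v : Fin n | pdeg T v = 2}.ncard + {v : Fin n | IsCentral T v}.ncard = n / 2)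

/-!
In `C_n` the neighbours of `v` are exactly `v - 1` and `v + 1`, so each of two disjoint total
dominating sets contains exactly one of them. Thus membership in `S₁` flips under translation
by `2`, and since `n • 2 = 0` and `(n / 2) • 2 = 0` in `Fin n`, both `n` and `n / 2` are even.
Conversely, for `4 ∣ n` the vertices `i` with `i % 4 < 2` and their complement work.
-/

section Flip

variable {G : Type*} [AddMonoid G] {S : Set G} {a : G}

theorem add_nsmul_mem_iff_of_add_mem_iff_notMem (h : ∀ x, x + a ∈ S ↔ x ∉ S) (x : G) (k : ℕ) :
    x + k • a ∈ S ↔ (x ∈ S ↔ Even k) := by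
  induction k with
  | zero => simp
  | succ k ih =>
    rw [succ_nsmul, ← add_assoc, h, ih, Nat.even_add_one]
    tauto

theorem even_of_nsmul_eq_zero_of_add_mem_iff_notMem (h : ∀ x, x + a ∈ S ↔ x ∉ S) {k : ℕ}
    (hk : k • a = 0) : Even k := by
  have h0 := add_nsmul_mem_iff_of_add_mem_iff_notMem h 0 k
  rw [hk, add_zero] at h0
  tauto

end Flip

section Cycle

variable {n : ℕ}

theorem cycleGraph_adj_iff {u v : Fin (n + 2)} :
    (cycleGraph (n + 2)).Adj v u ↔ u = v - 1 ∨ u = v + 1 := by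
  rw [← mem_neighborSet, cycleGraph_neighborSet]
  rfl

theorem isTotalDom_cycleGraph_iff {S : Set (Fin (n + 2))} :
    IsTotalDom (cycleGraph (n + 2)) S ↔ ∀ v, v - 1 ∈ S ∨ v + 1 ∈ S := by
  simp only [IsTotalDom, cycleGraph_adj_iff, and_or_left, exists_or, exists_eq_right]

theorem hasTwoTDS_cycleGraph_iff :
    HasTwoTDS (cycleGraph (n + 2)) ↔ ∃ S : Set (Fin (n + 2)), ∀ x, x + 2 ∈ S ↔ x ∉ S := by
  have htwo : ∀ x : Fin (n + 2), x + 1 + 1 = x + 2 := fun x => by rw [add_assoc]; rfl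
  simp only [HasTwoTDS, isTotalDom_cycleGraph_iff]
  constructor
  · rintro ⟨S₁, S₂, hdisj, h₁, h₂⟩
    refine ⟨S₁, fun x => ?_⟩
    have h₁x := h₁ (x + 1)
    have h₂x := h₂ (x + 1)
    rw [add_sub_cancel_right, htwo] at h₁x h₂x
    have hx : x ∈ S₁ → x ∉ S₂ := fun h => Set.disjoint_left.1 hdisj h
    have hx₂ : x + 2 ∈ S₁ → x + 2 ∉ S₂ := fun h => Set.disjoint_left.1 hdisj h
    tauto
  · rintro ⟨S, hS⟩
    have hS' : ∀ v, v + 1 ∈ S ↔ v - 1 ∉ S := fun v => by rw [← hS, ← htwo, sub_add_cancel]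
    refine ⟨S, Sᶜ, disjoint_compl_right, fun v => ?_, fun v => ?_⟩
    · have hv := hS' v
      tauto
    · have hv := hS' v
      simp only [Set.mem_compl_iff]
      tauto

theorem val_add_two_mod_four (h : 4 ∣ n + 2) (x : Fin (n + 2)) :
    (x + 2 : Fin (n + 2)).val % 4 = (x.val + 2) % 4 := by
  simp [Fin.val_add, Nat.mod_mod_of_dvd _ h]

theorem exists_add_two_mem_iff_notMem_iff_four_dvd :
    (∃ S : Set (Fin (n + 2)), ∀ x, x + 2 ∈ S ↔ x ∉ S) ↔ 4 ∣ n + 2 := by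
  constructor
  · rintro ⟨S, hS⟩
    have hcard : ∀ x : Fin (n + 2), (n + 2) • x = 0 := fun x => by
      simpa using card_nsmul_eq_zero (x := x)
    obtain ⟨m, hm⟩ := even_of_nsmul_eq_zero_of_add_mem_iff_notMem hS (hcard 2)
    obtain ⟨r, hr⟩ : Even m := even_of_nsmul_eq_zero_of_add_mem_iff_notMem hS <| calc
      m • (2 : Fin (n + 2)) = (m + m) • 1 := by rw [add_nsmul, ← nsmul_add]; rfl
      _ = 0 := by rw [← hm, hcard]
    omega
  · intro h
    refine ⟨{x | x.val % 4 < 2}, fun x => ?_⟩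
    simp only [Set.mem_ofPred_eq, val_add_two_mod_four h]
    omega

end Cycle

/-- The cycle `C_n`, `n ≥ 4`, has two disjoint total dominating sets
iff `4 ∣ n`. -/
theorem stmt2 (n : ℕ) (hn : 4 ≤ n) :
    HasTwoTDS (SimpleGraph.cycleGraph n) ↔ 4 ∣ n := by
  obtain ⟨m, rfl⟩ : ∃ m, n = m + 2 := ⟨n - 2, by omega⟩
  rw [hasTwoTDS_cycleGraph_iff, exists_add_two_mem_iff_notMem_iff_four_dvd]
end

section
/- Let T be a tree on at least 5 vertices with maximum degree at most 3. Then there exists a vertex u of T such that deleting u from T leaves at most one component of order greater than 3, and at least one component of order 2 or 3. -/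
open SimpleGraph

/-!
Root the tree at any vertex `r`, let `x` be a vertex farthest from `r`, `w` its parent and `u`
its grandparent (`x` has depth at least 2, as otherwise `T` would be a star with at most
`1 + 3` vertices). Every component of `T - u` that misses `r` hangs below `u`, so by the choice
of `x` it lies within distance 2 of `u`. As `T` is a tree, such a component contains exactly one
neighbour `a` of `u` and is contained in `{a} ∪ (N(a) \ {u})`, which has `deg a ≤ 3` vertices.
So only the component through `r` can have more than 3 vertices, while the component of `w`
misses `r` and contains both `w` and `x`.
-/

namespace SimpleGraph

variable {V : Type*} {G : SimpleGraph V}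

lemma Reachable.exists_adj_dist_eq_add_one {u v : V} (h : G.Reachable u v) (hne : u ≠ v) :
    ∃ w, G.Adj w v ∧ G.dist u v = G.dist u w + 1 := by
  obtain ⟨p, -, hp⟩ := h.exists_path_of_dist
  obtain ⟨w, hvw, q, hq⟩ := p.reverse.exists_eq_cons_of_ne hne.symm
  have hlen : q.length + 1 = G.dist u v := by
    rw [← hp, ← p.length_reverse, hq, Walk.length_cons]
  have hq_le : G.dist u w ≤ q.length := q.length_reverse ▸ dist_le q.reverse
  have htri := hvw.symm.reachable.dist_triangle_right u
  rw [dist_eq_one_iff_adj.2 hvw.symm] at htri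
  exact ⟨w, hvw.symm, by omega⟩

lemma Connected.card_le_ncard_neighborSet_add_one [G.LocallyFinite] (hconn : G.Connected) {r : V}
    (hr : ∀ v, G.dist r v ≤ 1) : Nat.card V ≤ (G.neighborSet r).ncard + 1 := by
  have huniv : (Set.univ : Set V) ⊆ insert r (G.neighborSet r) := by
    intro v _
    rcases eq_or_ne r v with rfl | hne
    · exact Set.mem_insert _ _
    · exact Set.mem_insert_of_mem _
        (dist_eq_one_iff_adj.1 (le_antisymm (hr v) (hconn.pos_dist_of_ne hne)))
  calc Nat.card V = (Set.univ : Set V).ncard := (Set.ncard_univ V).symm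
    _ ≤ (insert r (G.neighborSet r)).ncard := Set.ncard_le_ncard huniv
    _ ≤ (G.neighborSet r).ncard + 1 := Set.ncard_insert_le _ _

lemma exists_adj_reachable_induce_of_dist_le_two {u b : V} (h : G.Reachable u b) (hb : b ≠ u)
    (h2 : G.dist u b ≤ 2) :
    ∃ a, ∃ hua : G.Adj u a,
      (G.induce {v | v ≠ u}).Reachable ⟨a, hua.ne'⟩ ⟨b, hb⟩ ∧ (a = b ∨ G.Adj a b) := by
  obtain ⟨p, hp, hpl⟩ := h.exists_path_of_dist
  cases p with
  | nil => exact absurd rfl hb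
  | @cons _ a _ hua q =>
    rw [Walk.cons_isPath_iff] at hp
    refine ⟨a, hua, ⟨q.induce _ fun v hv (hvu : v = u) => hp.2 (hvu ▸ hv)⟩, ?_⟩
    rw [Walk.length_cons] at hpl
    cases q with
    | nil => exact .inl rfl
    | cons hab r =>
      cases r with
      | nil => exact .inr hab
      | cons _ _ => simp only [Walk.length_cons] at hpl; omega

lemma IsAcyclic.support_subset_of_reachable_induce (hG : G.IsAcyclic) {s : Set V} {a b : V}
    {ha : a ∈ s} {hb : b ∈ s} (h : (G.induce s).Reachable ⟨a, ha⟩ ⟨b, hb⟩) {p : G.Walk a b}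
    (hp : p.IsPath) : ∀ v ∈ p.support, v ∈ s := by
  classical
  obtain ⟨q⟩ := h
  set q' : G.Walk a b := q.map (Embedding.induce s).toHom
  have hq' : ∀ v ∈ q'.support, v ∈ s := by
    intro v hv
    obtain ⟨v, -, rfl⟩ := List.mem_map.1 (Walk.support_map _ q ▸ hv)
    exact v.2
  have hpq : p = q'.bypass :=
    congrArg Subtype.val ((hG.subsingleton_path a b).elim ⟨p, hp⟩ ⟨_, q'.bypass_isPath⟩)
  exact fun v hv => hq' v (q'.support_bypass_subset_support (hpq ▸ hv))

lemma IsAcyclic.eq_of_adj_of_reachable_induce (hG : G.IsAcyclic) {u a a' : V} (ha : G.Adj u a)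
    (ha' : G.Adj u a') (h : (G.induce {v | v ≠ u}).Reachable ⟨a, ha.ne'⟩ ⟨a', ha'.ne'⟩) :
    a = a' := by
  by_contra hne
  have hpath : (Walk.cons ha.symm (Walk.cons ha' Walk.nil)).IsPath := by
    simp [ha'.ne, ha.ne', hne]
  exact hG.support_subset_of_reachable_induce h hpath u (by simp) rfl

lemma Connected.dist_eq_dist_add_dist_of_mem_supp (hconn : G.Connected) {r u : V}
    {c : (G.induce {v | v ≠ u}).ConnectedComponent} (hc : ∀ b ∈ c.supp, (b : V) ≠ r)
    {b : {v | v ≠ u}} (hb : b ∈ c.supp) : G.dist r b = G.dist r u + G.dist u b := by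
  classical
  obtain ⟨p, -, hp⟩ := (hconn r b).exists_path_of_dist
  by_cases hu : u ∈ p.support
  · have hsplit : p.length = (p.takeUntil u hu).length + (p.dropUntil u hu).length := by
      rw [← Walk.length_append, p.take_spec hu]
    have := dist_le (p.takeUntil u hu)
    have := dist_le (p.dropUntil u hu)
    have := hconn.dist_triangle (u := r) (v := u) (w := b)
    omega
  · have hrb : (G.induce {v | v ≠ u}).Reachable _ b :=
      ⟨p.induce _ fun v hv (hvu : v = u) => hu (hvu ▸ hv)⟩
    exact absurd rfl (hc _ ((ConnectedComponent.sound hrb).trans hb))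

lemma IsTree.exists_adj_ncard_supp_le [G.LocallyFinite] (hG : G.IsTree) {u : V}
    (c : (G.induce {v | v ≠ u}).ConnectedComponent) (hc : ∀ b ∈ c.supp, G.dist u b ≤ 2) :
    ∃ a, G.Adj u a ∧ c.supp.ncard ≤ (G.neighborSet a).ncard := by
  have key : ∀ b ∈ c.supp,
      ∃ a, ∃ hua : G.Adj u a, ⟨a, hua.ne'⟩ ∈ c.supp ∧ (a = b ∨ G.Adj a b) := by
    intro b hb
    obtain ⟨a, hua, hab, h⟩ :=
      exists_adj_reachable_induce_of_dist_le_two (hG.connected u b) b.2 (hc b hb)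
    exact ⟨a, hua, (ConnectedComponent.sound hab).trans hb, h⟩
  obtain ⟨a, hua, hac, -⟩ := key _ c.nonempty_supp.some_mem
  refine ⟨a, hua, ?_⟩
  have himg : Subtype.val '' c.supp ⊆ insert a (G.neighborSet a \ {u}) := by
    rintro _ ⟨b, hb, rfl⟩
    obtain ⟨a', hua', ha'c, hab⟩ := key b hb
    obtain rfl : a' = a := hG.isAcyclic.eq_of_adj_of_reachable_induce hua' hua
      (ConnectedComponent.exact (ha'c.trans hac.symm))
    rcases hab with rfl | hab
    · exact Set.mem_insert _ _
    · exact Set.mem_insert_of_mem _ ⟨hab, b.2⟩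
  calc c.supp.ncard = (Subtype.val '' c.supp).ncard :=
        (Set.ncard_image_of_injective _ Subtype.val_injective).symm
    _ ≤ (insert a (G.neighborSet a \ {u})).ncard := Set.ncard_le_ncard himg
    _ = (G.neighborSet a).ncard := Set.ncard_exchange G.notMem_neighborSet_self hua.symm

lemma IsTree.ncard_supp_le_of_forall_dist_le [G.LocallyFinite] (hG : G.IsTree) {r u : V} {k : ℕ}
    (hdeg : ∀ v, (G.neighborSet v).ncard ≤ k) (hfar : ∀ v, G.dist r v ≤ G.dist r u + 2)
    (c : (G.induce {v | v ≠ u}).ConnectedComponent) (hc : ∀ b ∈ c.supp, (b : V) ≠ r) :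
    c.supp.ncard ≤ k := by
  obtain ⟨a, -, hca⟩ := hG.exists_adj_ncard_supp_le c fun b hb => by
    have := hG.connected.dist_eq_dist_add_dist_of_mem_supp hc hb
    have := hfar b
    omega
  exact hca.trans (hdeg a)

lemma IsTree.ne_of_mem_supp_of_dist_eq_add_one (hG : G.IsTree) {r u w : V} (huw : G.Adj u w)
    (hw : G.dist r w = G.dist r u + 1) :
    ∀ b ∈ ((G.induce {v | v ≠ u}).connectedComponentMk ⟨w, huw.ne'⟩).supp, (b : V) ≠ r := by
  rintro ⟨b, hbu⟩ hb (rfl : b = _)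
  obtain ⟨p, -, hp⟩ := (hG.connected b u).exists_path_of_dist
  have hpath : (p.concat huw).IsPath :=
    (p.concat huw).isPath_of_length_eq_dist (by simp [hp, hw])
  exact hG.isAcyclic.support_subset_of_reachable_induce (ConnectedComponent.exact hb) hpath u
    (p.support_subset_support_concat huw p.end_mem_support) rfl

lemma ConnectedComponent.one_lt_ncard_supp_of_adj [Finite V] {a b : V} (h : G.Adj a b) :
    1 < (G.connectedComponentMk a).supp.ncard :=
  (Set.one_lt_ncard_iff (Set.toFinite _)).2
    ⟨a, b, rfl, (ConnectedComponent.sound h.reachable).symm, h.ne⟩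

lemma ncard_setOf_lt_ncard_supp_le_one {W : Type*} [Finite W] {H : SimpleGraph W} {R : Set W}
    (hR : R.Subsingleton) {k : ℕ} (h : ∀ c : H.ConnectedComponent, (∀ b ∈ c.supp, b ∉ R) →
      c.supp.ncard ≤ k) :
    {c : H.ConnectedComponent | k < c.supp.ncard}.ncard ≤ 1 := by
  have hbig : ∀ c : H.ConnectedComponent, k < c.supp.ncard → ∃ b ∈ R, b ∈ c.supp := by
    intro c hc
    by_contra! hno
    exact (h c fun b hb hbR => hno b hbR hb).not_gt hc
  refine (Set.ncard_le_one_iff (Set.toFinite _)).2 fun {c c'} hc hc' => ?_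
  obtain ⟨b, hbR, hbc⟩ := hbig c hc
  obtain ⟨b', hbR', hbc'⟩ := hbig c' hc'
  rw [← hbc, ← hbc', hR hbR hbR']

end SimpleGraph

/-- if `T` is a tree on at least 5 vertices with maximum degree ≤ 3,
then there is a vertex `u` such that `T - u` has at most one component of order > 3
and at least one component of order 2 or 3. -/
theorem stmt6 {V : Type*} [Fintype V] (G : SimpleGraph V) (ht : G.IsTree)
    (hcard : 5 ≤ Fintype.card V)
    (hdeg : ∀ v : V, (G.neighborSet v).ncard ≤ 3) :
    ∃ u : V,
      {c : (G.induce {v : V | v ≠ u}).ConnectedComponent | 3 < c.supp.ncard}.ncard ≤ 1 ∧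
      ∃ c : (G.induce {v : V | v ≠ u}).ConnectedComponent,
        c.supp.ncard = 2 ∨ c.supp.ncard = 3 := by
  classical
  obtain ⟨r⟩ := ht.connected.nonempty
  have : Nonempty V := ⟨r⟩
  obtain ⟨x, hx⟩ := Finite.exists_max (G.dist r)
  have hD : 2 ≤ G.dist r x := by
    by_contra! hlt
    have hle := ht.connected.card_le_ncard_neighborSet_add_one fun v => (hx v).trans (by omega)
    rw [Nat.card_eq_fintype_card] at hle
    linarith [hdeg r]
  obtain ⟨w, hwx, hw⟩ := (ht.connected r x).exists_adj_dist_eq_add_one (by rintro rfl; simp at hD)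
  obtain ⟨u, huw, hu⟩ :=
    (ht.connected r w).exists_adj_dist_eq_add_one (by rintro rfl; rw [dist_self] at hw; omega)
  have hsmall := ht.ncard_supp_le_of_forall_dist_le hdeg (r := r) (u := u)
    fun v => (hx v).trans (by omega)
  refine ⟨u, ncard_setOf_lt_ncard_supp_le_one (R := Subtype.val ⁻¹' {r})
    (Set.subsingleton_singleton.preimage Subtype.val_injective) hsmall,
    (G.induce _).connectedComponentMk ⟨w, huw.ne'⟩, ?_⟩
  have hxu : x ≠ u := by rintro rfl; omega
  have hle := hsmall _ (ht.ne_of_mem_supp_of_dist_eq_add_one huw hu)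
  have hlt := ConnectedComponent.one_lt_ncard_supp_of_adj
    (G := G.induce {v | v ≠ u}) (a := ⟨w, huw.ne'⟩) (b := ⟨x, hxu⟩) hwx
  omega
end

section
/- Let G be a maximal outerplanar graph whose order n is divisible by 4. Then G has two disjoint total dominating sets. -/
open SimpleGraph

lemma succ_adj {n : ℕ} (T : PolyTriangulation n) (hn : 2 ≤ n) (v : Fin n) :
    T.graph.Adj v ⟨(v.val + 1) % n, Nat.mod_lt _ (by omega)⟩ := by
  have hv := v.isLt
  refine ⟨?_, Or.inl (Or.inl rfl)⟩
  intro h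
  have hc : v.val = (v.val + 1) % n := congrArg Fin.val h
  rcases Nat.lt_or_ge (v.val + 1) n with h1 | h1
  · rw [Nat.mod_eq_of_lt h1] at hc; omega
  · have heq : v.val + 1 = n := by omega
    rw [heq, Nat.mod_self] at hc; omega

lemma pred_adj {n : ℕ} (T : PolyTriangulation n) (hn : 2 ≤ n) (v : Fin n) :
    T.graph.Adj v ⟨(v.val + n - 1) % n, Nat.mod_lt _ (by omega)⟩ := by
  have hv := v.isLt
  have key : ((v.val + n - 1) % n + 1) % n = v.val := by
    rw [Nat.mod_add_mod, show v.val + n - 1 + 1 = v.val + n from by omega,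
      Nat.add_mod_right, Nat.mod_eq_of_lt hv]
  have h := succ_adj T hn ⟨(v.val + n - 1) % n, Nat.mod_lt _ (by omega)⟩
  have hv' : (⟨((v.val + n - 1) % n + 1) % n, Nat.mod_lt _ (by omega)⟩ : Fin n) = v :=
    Fin.ext key
  rw [hv'] at h
  exact h.symm

/-- a maximal outerplanar graph whose order is divisible by 4 has two
disjoint total dominating sets. -/
theorem stmt7 (n : ℕ) (h4 : 4 ∣ n) (T : PolyTriangulation n) :
    HasTwoTDS T.graph := by
  rcases Nat.eq_zero_or_pos n with h0 | hpos
  · subst h0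
    exact ⟨∅, ∅, disjoint_bot_left, fun v => v.elim0, fun v => v.elim0⟩
  · have hn4 : 4 ≤ n := Nat.le_of_dvd hpos h4
    obtain ⟨k, hk⟩ := h4
    refine ⟨{v | v.val % 4 < 2}, {v | 2 ≤ v.val % 4}, ?_, ?_, ?_⟩
    · rw [Set.disjoint_left]; intro v hv hv'
      simp only [Set.mem_setOf_eq] at hv hv'; omega
    all_goals
      intro v
      have hv := v.isLt
      have hsmod : (v.val + 1) % n % 4 = (v.val + 1) % 4 :=
        Nat.mod_mod_of_dvd _ ⟨k, hk⟩
      have hpmod : (v.val + n - 1) % n % 4 = (v.val + n - 1) % 4 :=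
        Nat.mod_mod_of_dvd _ ⟨k, hk⟩
      rcases Nat.lt_or_ge (v.val % 4) 2 with hr | hr
    · -- S₁, v % 4 ∈ {0,1}
      rcases Nat.lt_or_ge (v.val % 4) 1 with hr0 | hr0
      · -- v % 4 = 0 : use successor (residue 1)
        exact ⟨_, by simp only [Set.mem_setOf_eq]; omega, succ_adj T (by omega) v⟩
      · -- v % 4 = 1 : use predecessor (residue 0)
        exact ⟨_, by simp only [Set.mem_setOf_eq]; omega, pred_adj T (by omega) v⟩
    · -- S₁, v % 4 ∈ {2,3}
      rcases Nat.lt_or_ge (v.val % 4) 3 with hr3 | hr3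
      · -- v % 4 = 2 : predecessor has residue 1
        exact ⟨_, by simp only [Set.mem_setOf_eq]; omega, pred_adj T (by omega) v⟩
      · -- v % 4 = 3 : successor has residue 0
        exact ⟨_, by simp only [Set.mem_setOf_eq]; omega, succ_adj T (by omega) v⟩
    · -- S₂, v % 4 ∈ {0,1}
      rcases Nat.lt_or_ge (v.val % 4) 1 with hr0 | hr0
      · -- v % 4 = 0 : predecessor has residue 3
        exact ⟨_, by simp only [Set.mem_setOf_eq]; omega, pred_adj T (by omega) v⟩
      · -- v % 4 = 1 : successor has residue 2
        exact ⟨_, by simp only [Set.mem_setOf_eq]; omega, succ_adj T (by omega) v⟩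
    · -- S₂, v % 4 ∈ {2,3}
      rcases Nat.lt_or_ge (v.val % 4) 3 with hr3 | hr3
      · -- v % 4 = 2 : successor has residue 3
        exact ⟨_, by simp only [Set.mem_setOf_eq]; omega, succ_adj T (by omega) v⟩
      · -- v % 4 = 3 : predecessor has residue 2
        exact ⟨_, by simp only [Set.mem_setOf_eq]; omega, pred_adj T (by omega) v⟩
end

section
/- For every odd integer m = 2k+1 ≥ 3 and every maximal outerplanar graph H of order m, the sun graph M(H) of order 4k+2 does not admit two disjoint total dominating sets. -/
open SimpleGraph

/-- The sun graph `M(H)` of a maximal outerplanar graph `H` on `Fin m`: for each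
boundary edge `v_i v_{i+1}` add a new vertex (the `i`-th `Sum.inr` vertex) adjacent
to exactly `v_i` and `v_{i+1}`. -/
def sunGraph {m : ℕ} (T : PolyTriangulation m) : SimpleGraph (Fin m ⊕ Fin m) :=
  SimpleGraph.fromRel (fun a b =>
    match a, b with
    | Sum.inl i, Sum.inl j => T.graph.Adj i j
    | Sum.inr i, Sum.inl j => j = i ∨ j.val = (i.val + 1) % m
    | _, _ => False)

/-- for every odd `m = 2k + 1 ≥ 3` and every maximal outerplanar graph `H`
of order `m`, the sun graph `M(H)` (of order `4k + 2`) has no two disjoint total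
dominating sets. -/
theorem stmt9 (k : ℕ) (hk : 1 ≤ k) (T : PolyTriangulation (2 * k + 1)) :
    ¬ HasTwoTDS (sunGraph T) := by
  rintro ⟨S₁, S₂, hdis, h1, h2⟩
  have hm : 0 < 2 * k + 1 := by omega
  have hdis1 : ∀ a, a ∈ S₁ → a ∉ S₂ := fun a ha => Set.disjoint_left.mp hdis ha
  have nbr : ∀ (i : Fin (2 * k + 1)) (u : Fin (2 * k + 1) ⊕ Fin (2 * k + 1)),
      (sunGraph T).Adj (Sum.inr i) u →
      u = Sum.inl i ∨ u = Sum.inl ⟨(i.val + 1) % (2 * k + 1), Nat.mod_lt _ hm⟩ := by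
    intro i u hu
    rcases u with j | j
    · simp only [sunGraph, fromRel_adj] at hu
      rcases hu.2 with (h | h) | h
      · left; exact congrArg Sum.inl h
      · right; exact congrArg Sum.inl (Fin.ext h)
      · exact absurd h (by simp)
    · simp only [sunGraph, fromRel_adj] at hu
      rcases hu.2 with h | h <;> exact absurd h (by simp)
  have key : ∀ i : Fin (2 * k + 1),
      ((Sum.inl i : Fin (2 * k + 1) ⊕ Fin (2 * k + 1)) ∈ S₁ ↔
        (Sum.inl (⟨(i.val + 1) % (2 * k + 1), Nat.mod_lt _ hm⟩ : Fin (2 * k + 1)) :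
          Fin (2 * k + 1) ⊕ Fin (2 * k + 1)) ∉ S₁) := by
    intro i
    obtain ⟨u1, hu1, ha1⟩ := h1 (Sum.inr i)
    obtain ⟨u2, hu2, ha2⟩ := h2 (Sum.inr i)
    rcases nbr i u1 ha1 with rfl | rfl <;> rcases nbr i u2 ha2 with rfl | rfl
    · exact absurd hu2 (hdis1 _ hu1)
    · exact ⟨fun _ hc => hdis1 _ hc hu2, fun _ => hu1⟩
    · exact ⟨fun h => absurd hu2 (hdis1 _ h), fun h => absurd hu1 h⟩
    · exact absurd hu2 (hdis1 _ hu1)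
  set f : ℕ → Prop := fun j =>
    (Sum.inl (⟨j % (2 * k + 1), Nat.mod_lt _ hm⟩ : Fin (2 * k + 1)) :
      Fin (2 * k + 1) ⊕ Fin (2 * k + 1)) ∈ S₁ with hf
  have step : ∀ j, f (j + 1) ↔ ¬ f j := by
    intro j
    have hkey := key ⟨j % (2 * k + 1), Nat.mod_lt _ hm⟩
    have hval : (j % (2 * k + 1) + 1) % (2 * k + 1) = (j + 1) % (2 * k + 1) :=
      Nat.mod_add_mod j (2 * k + 1) 1
    simp only [hf]
    rw [show (⟨(j + 1) % (2 * k + 1), Nat.mod_lt _ hm⟩ : Fin (2 * k + 1)) =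
        ⟨(j % (2 * k + 1) + 1) % (2 * k + 1), Nat.mod_lt _ hm⟩ from Fin.ext hval.symm]
    tauto
  have even : ∀ j, f (2 * j) ↔ f 0 := by
    intro j
    induction j with
    | zero => rfl
    | succ n ih =>
      have h1 := step (2 * n)
      have h2 := step (2 * n + 1)
      have : 2 * (n + 1) = 2 * n + 1 + 1 := by ring
      rw [this]
      tauto
  have hlast : f (2 * k + 1) ↔ ¬ f 0 := by
    have := step (2 * k)
    have := even k
    tauto
  have heq : f (2 * k + 1) ↔ f 0 := by
    simp only [hf]
    rw [show (⟨(2 * k + 1) % (2 * k + 1), Nat.mod_lt _ hm⟩ : Fin (2 * k + 1)) =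
        ⟨0 % (2 * k + 1), Nat.mod_lt _ hm⟩ from Fin.ext (by simp)]
  tauto
end

section
/- No generalized sun graph admits two disjoint total dominating sets. Stronger form: in a generalized sun graph, there is no 2-coloring of the vertices such that every degree-2 vertex and every central vertex has neighbors of both colors. -/
open SimpleGraph

/-!
Call a vertex *special* if it has degree 2 or is central. Because `n ≡ 2 (mod 4)`, every
neighbour of a special vertex `v` lies at a cyclic offset `≡ 1 (mod 4)` from `v` (for degree 2
this is `n - 1 ≡ 1`). Two consecutive vertices of the cycle are never both special: the apex of the
triangle on their edge would sit at offsets from them differing by one. As there are `n / 2`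
special vertices, they form one parity class.

Now let every special vertex see both colours. By induction on `b - a`, the ends of an edge
`a < b` between non-special vertices have the same colour iff `4 ∣ b - a`. Two consecutive
neighbours of a special vertex on the same side of it are adjacent, by such an edge of length
`≡ 0 (mod 4)`, so all its neighbours on one side share a colour. For whichever of `0`, `n - 1` is
special, all neighbours lie on one side: contradiction.
-/

lemma Nat.add_one_mod_eq_ite {i n : ℕ} (hi : i < n) :
    (i + 1) % n = if i + 1 = n then 0 else i + 1 := by
  split_ifs with h
  · rw [h, Nat.mod_self]
  · exact Nat.mod_eq_of_lt (by omega)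

lemma val_finRotate {n : ℕ} (v : Fin n) :
    (finRotate n v).val = if v.val + 1 = n then 0 else v.val + 1 := by
  obtain ⟨m, rfl⟩ : ∃ m, n = m + 1 := ⟨n - 1, by have := v.isLt; omega⟩
  rw [coe_finRotate]
  simp [Fin.ext_iff]

/-- The cyclic distance from `v` forward to `u`, as in the definition of `IsCentral`. -/
def cyclicOffset {n : ℕ} (v u : Fin n) : ℕ := (u.val + n - v.val) % n

lemma cyclicOffset_eq {n : ℕ} (v u : Fin n) :
    cyclicOffset v u = if v.val ≤ u.val then u.val - v.val else u.val + n - v.val := by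
  have := u.isLt
  have := v.isLt
  unfold cyclicOffset
  split_ifs with h
  · rw [show u.val + n - v.val = u.val - v.val + n by omega, Nat.add_mod_right,
      Nat.mod_eq_of_lt (by omega)]
  · exact Nat.mod_eq_of_lt (by omega)

lemma cyclicOffset_finRotate {n : ℕ} (hn : 2 ≤ n) (v : Fin n) :
    cyclicOffset v (finRotate n v) = 1 := by
  rw [cyclicOffset_eq, val_finRotate]
  split_ifs <;> omega

theorem mem_iff_mem_iff_mod_two_eq {n : ℕ} {S : Set (Fin n)}
    (hS : ∀ v ∈ S, finRotate n v ∉ S) (hcard : 2 * S.ncard = n) (u v : Fin n) :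
    (u ∈ S ↔ v ∈ S) ↔ u.val % 2 = v.val % 2 := by
  have hunion : S ∪ finRotate n '' S = Set.univ := by
    have hdisj : Disjoint S (finRotate n '' S) :=
      Set.disjoint_left.2 fun w hw ⟨x, hx, hxw⟩ => hS x hx (hxw ▸ hw)
    refine Set.eq_of_subset_of_ncard_le (Set.subset_univ _) ?_ (Set.toFinite _)
    rw [Set.ncard_union_eq hdisj, Set.ncard_image_of_injective _ (finRotate n).injective,
      Set.ncard_univ, Nat.card_eq_fintype_card, Fintype.card_fin]
    omega
  have hstep : ∀ w, finRotate n w ∈ S ↔ w ∉ S := fun w =>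
    ⟨fun hw hwS => hS w hwS hw, fun hw => by
      have := hunion ▸ Set.mem_univ (finRotate n w)
      rwa [Set.mem_union, (finRotate n).injective.mem_set_image, or_iff_left hw] at this⟩
  have hn : 0 < n := Nat.zero_lt_of_lt u.isLt
  have hpar : ∀ k (hk : k < n), ((⟨k, hk⟩ : Fin n) ∈ S ↔ (⟨0, hn⟩ : Fin n) ∈ S) ↔ k % 2 = 0 := by
    intro k
    induction k with
    | zero => simp
    | succ k ih =>
      intro hk
      have hrot : finRotate n ⟨k, by omega⟩ = ⟨k + 1, hk⟩ := by
        ext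
        rw [val_finRotate, if_neg (by simp; omega)]
      rw [← hrot, hstep, ← not_iff, ih (by omega)]
      omega
  have hu := hpar u.val u.isLt
  have hv := hpar v.val v.isLt
  simp only [Fin.eta] at hu hv
  by_cases h₀ : (⟨0, hn⟩ : Fin n) ∈ S
  · simp only [h₀, iff_true] at hu hv
    rw [hu, hv]
    omega
  · simp only [h₀, iff_false] at hu hv
    rw [← not_iff_not (a := u ∈ S), hu, hv]
    omega

theorem Finset.apply_eq_of_consecutive {α β : Type*} [LinearOrder α] (s : Finset α)
    (f : α → β) (h : ∀ a ∈ s, ∀ b ∈ s, a < b → (∀ c ∈ s, ¬ (a < c ∧ c < b)) → f a = f b) :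
    ∀ a ∈ s, ∀ b ∈ s, f a = f b := by
  induction s using Finset.induction_on_max with
  | empty => simp
  | insert m s hm ih =>
    have ih := ih fun a ha b hb hab hgap => h a (mem_insert_of_mem ha) b (mem_insert_of_mem hb)
      hab fun c hc ⟨hac, hcb⟩ => by
        rcases mem_insert.1 hc with rfl | hc
        · exact absurd (hm b hb) (not_lt.2 hcb.le)
        · exact hgap c hc ⟨hac, hcb⟩
    suffices hfm : ∀ a ∈ s, f a = f m by
      intro a ha b hb
      rcases mem_insert.1 ha with rfl | ha' <;> rcases mem_insert.1 hb with rfl | hb'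
      exacts [rfl, (hfm b hb').symm, hfm a ha', ih a ha' b hb']
    intro a ha
    have hne : s.Nonempty := ⟨a, ha⟩
    refine (ih a ha _ (s.max'_mem hne)).trans (h _ (mem_insert_of_mem (s.max'_mem hne)) m
      (mem_insert_self m s) (hm _ (s.max'_mem hne)) fun c hc ⟨hlt, hcm⟩ => ?_)
    rcases mem_insert.1 hc with rfl | hc
    · exact lt_irrefl _ hcm
    · exact not_lt.2 (s.le_max' c hc) hlt

def SimpleGraph.SeesBothColors {V : Type*} (G : SimpleGraph V) (c : V → Bool) (v : V) : Prop :=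
  (∃ u, G.Adj v u ∧ c u = true) ∧ (∃ u, G.Adj v u ∧ c u = false)

lemma SimpleGraph.SeesBothColors.exists_adj_adj_ne {V : Type*} {G : SimpleGraph V}
    {c : V → Bool} {v : V} (h : G.SeesBothColors c v) : ∃ u w, G.Adj v u ∧ G.Adj v w ∧ c u ≠ c w :=
  let ⟨⟨u, hu, hcu⟩, ⟨w, hw, hcw⟩⟩ := h
  ⟨u, w, hu, hw, by simp [hcu, hcw]⟩

lemma HasTwoTDS.exists_seesBothColors {V : Type*} {G : SimpleGraph V} (h : HasTwoTDS G) :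
    ∃ c : V → Bool, ∀ v, G.SeesBothColors c v := by
  classical
  obtain ⟨S₁, S₂, hdisj, h₁, h₂⟩ := h
  refine ⟨fun v => decide (v ∈ S₁), fun v => ⟨?_, ?_⟩⟩
  · obtain ⟨u, hu, hvu⟩ := h₁ v
    exact ⟨u, hvu, decide_eq_true hu⟩
  · obtain ⟨u, hu, hvu⟩ := h₂ v
    exact ⟨u, hvu, decide_eq_false (Set.disjoint_right.1 hdisj hu)⟩

def IsNoncrossingIn (D : Finset (ℕ × ℕ)) (a b : ℕ) : Prop :=
  (∀ p ∈ D, a ≤ p.1 ∧ p.1 + 2 ≤ p.2 ∧ p.2 ≤ b) ∧ ∀ p ∈ D, ∀ q ∈ D, ¬ Crosses p q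

namespace IsNoncrossingIn

variable {D : Finset (ℕ × ℕ)} {a b : ℕ}

lemma subset (h : IsNoncrossingIn D a b) {D' : Finset (ℕ × ℕ)} {a' b' : ℕ} (hD : D' ⊆ D)
    (hrange : ∀ p ∈ D', a' ≤ p.1 ∧ p.2 ≤ b') : IsNoncrossingIn D' a' b' :=
  ⟨fun p hp => ⟨(hrange p hp).1, (h.1 p (hD hp)).2.1, (hrange p hp).2⟩,
    fun p hp q hq => h.2 p (hD hp) q (hD hq)⟩

lemma card_le_of_card_erase_le (h : IsNoncrossingIn D a b)
    (herase : (D.erase (a, b)).card ≤ b - a - 2) : D.card ≤ b - a - 1 := by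
  by_cases hmem : (a, b) ∈ D
  · have := Finset.card_erase_add_one hmem
    have := h.1 _ hmem
    omega
  · rw [Finset.erase_eq_of_notMem hmem] at herase
    omega

/-- Induction on `b - a`: a longest chord `(u, v)` other than `(a, b)` is crossed by no chord and
contains no longer one, so every chord lies in one of `[a, u]`, `[u, v]`, `[v, b]`. -/
theorem card_erase_le (h : IsNoncrossingIn D a b) : (D.erase (a, b)).card ≤ b - a - 2 := by
  induction hL : b - a using Nat.strong_induction_on generalizing D a b with
  | _ L ih =>
  have card_le : ∀ {D' : Finset (ℕ × ℕ)} {a' b' : ℕ}, IsNoncrossingIn D' a' b' →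
      b' - a' < L → D'.card ≤ b' - a' - 1 :=
    fun h' hlt => h'.card_le_of_card_erase_le (ih _ hlt h' rfl)
  rcases (D.erase (a, b)).eq_empty_or_nonempty with hE | hE
  · simp [hE]
  obtain ⟨⟨u, v⟩, huv, hmax⟩ := (D.erase (a, b)).exists_max_image (fun p => p.2 - p.1) hE
  obtain ⟨hne, huvD⟩ := Finset.mem_erase.1 huv
  obtain ⟨hau, huv2, hvb⟩ := h.1 _ huvD
  set D₁ := D.filter (fun p => p.2 ≤ u)
  set D₂ := D.filter (fun p => u ≤ p.1 ∧ p.2 ≤ v)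
  set D₃ := D.filter (fun p => v ≤ p.1)
  have hcover : D.erase (a, b) ⊆ D₁ ∪ D₂ ∪ D₃ := by
    rintro ⟨s, t⟩ hst
    have hlen := hmax _ hst
    have := h.1 _ (Finset.mem_of_mem_erase hst)
    have hnc := h.2 _ huvD _ (Finset.mem_of_mem_erase hst)
    simp only [Crosses] at hnc hlen this
    simp only [D₁, D₂, D₃, Finset.mem_union, Finset.mem_filter, Finset.mem_of_mem_erase hst,
      true_and]
    omega
  have h₁ : D₁.card ≤ u - a - 1 := card_le (h.subset (Finset.filter_subset _ _) fun p hp =>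
    ⟨(h.1 p (Finset.mem_filter.1 hp).1).1, (Finset.mem_filter.1 hp).2⟩) (by omega)
  have h₂ : D₂.card ≤ v - u - 1 := card_le (h.subset (Finset.filter_subset _ _) fun p hp =>
    (Finset.mem_filter.1 hp).2) (by simp only [ne_eq, Prod.mk.injEq] at hne; omega)
  have h₃ : D₃.card ≤ b - v - 1 := card_le (h.subset (Finset.filter_subset _ _) fun p hp =>
    ⟨(Finset.mem_filter.1 hp).2, (h.1 p (Finset.mem_filter.1 hp).1).2.2⟩) (by omega)
  have := Finset.card_le_card hcover
  have := Finset.card_union_le (D₁ ∪ D₂) D₃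
  have := Finset.card_union_le D₁ D₂
  simp only [ne_eq, Prod.mk.injEq] at hne
  omega

theorem card_le (h : IsNoncrossingIn D a b) : D.card ≤ b - a - 1 :=
  h.card_le_of_card_erase_le h.card_erase_le

end IsNoncrossingIn

namespace PolyTriangulation

variable {n : ℕ} (T : PolyTriangulation n)

lemma isNoncrossingIn : IsNoncrossingIn T.diags 0 (n - 1) :=
  ⟨fun p hp => by have := T.isDiag p hp; simp only [IsDiag] at this; omega, T.noncross⟩

lemma zero_last_notMem_diags : (0, n - 1) ∉ T.diags := fun h => by
  have := T.isDiag _ h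
  simp only [IsDiag] at this
  omega

theorem adj_iff_of_lt {u v : Fin n} (huv : u < v) :
    T.graph.Adj u v ↔
      v.val = u.val + 1 ∨ (u.val = 0 ∧ v.val = n - 1) ∨ (u.val, v.val) ∈ T.diags := by
  have huv' : u.val ≤ v.val := huv.le
  rw [graph, fromRel_adj, min_eq_left huv', max_eq_right huv', min_eq_right huv',
    max_eq_left huv', Nat.add_one_mod_eq_ite u.isLt,
    Nat.add_one_mod_eq_ite v.isLt]
  constructor
  · rintro ⟨-, (h | h) | (h | h)⟩ <;> (try split_ifs at h) <;>
      first | omega | exact Or.inr (Or.inr h)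
  · rintro (h | h | h)
    · exact ⟨huv.ne, Or.inl (Or.inl (by rw [if_neg (by omega)]; omega))⟩
    · exact ⟨huv.ne, Or.inr (Or.inl (by rw [if_pos (by omega)]; omega))⟩
    · exact ⟨huv.ne, Or.inl (Or.inr h)⟩

lemma adj_of_mem_diags {u v : Fin n} (h : (u.val, v.val) ∈ T.diags) : T.graph.Adj u v := by
  have := T.isDiag _ h
  simp only [IsDiag] at this
  exact (T.adj_iff_of_lt (Fin.lt_def.2 this.1)).2 (Or.inr (Or.inr h))

lemma mem_diags_of_adj {u v : Fin n} (huv : u.val + 2 ≤ v.val) (h : T.graph.Adj u v)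
    (hwrap : u.val ≠ 0 ∨ v.val ≠ n - 1) : (u.val, v.val) ∈ T.diags := by
  rcases (T.adj_iff_of_lt (by omega)).1 h with h | h | h
  · omega
  · omega
  · exact h

theorem not_adj_of_crossing {a b c d : Fin n} (hac : a < c) (hcb : c < b) (hbd : b < d)
    (hab : T.graph.Adj a b) : ¬ T.graph.Adj c d := fun hcd =>
  T.noncross _ (T.mem_diags_of_adj (by omega) hab (by omega)) _
    (T.mem_diags_of_adj (by omega) hcd (by omega)) (Or.inl ⟨hac, hcb, hbd⟩)

def diagsIn (a b : ℕ) : Finset (ℕ × ℕ) := T.diags.filter fun p => a ≤ p.1 ∧ p.2 ≤ b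

lemma diagsIn_subset (a b : ℕ) : T.diagsIn a b ⊆ T.diags := Finset.filter_subset _ _

lemma isNoncrossingIn_diagsIn (a b : ℕ) : IsNoncrossingIn (T.diagsIn a b) a b :=
  T.isNoncrossingIn.subset (T.diagsIn_subset a b) fun _ hp => (Finset.mem_filter.1 hp).2

/-- Contracting the sub-polygon on `a, …, b` to an edge `(a, a + 1)` turns the diagonals outside
it into non-crossing chords of a polygon on `0, …, n - (b - a)` that avoid its closing chord. -/
lemma card_diags_sdiff_diagsIn_le {a b : ℕ} (hab : a < b) (hb : b < n)
    (hnc : ∀ q ∈ T.diags, ¬ Crosses (a, b) q) :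
    (T.diags \ T.diagsIn a b).card ≤ n - (b - a) - 2 := by
  set Out := T.diags \ T.diagsIn a b
  set φ : ℕ → ℕ := fun j => if j ≤ a then j else j - (b - a - 1)
  have hout : ∀ q ∈ Out, q ∈ T.diags ∧ (q.1 ≤ a ∨ b ≤ q.1) ∧ (q.2 ≤ a ∨ b ≤ q.2) ∧
      ¬(a ≤ q.1 ∧ q.2 ≤ b) ∧ q.1 + 2 ≤ q.2 ∧ q.2 < n := by
    intro q hq
    obtain ⟨hqD, hq⟩ := Finset.mem_sdiff.1 hq
    simp only [diagsIn, Finset.mem_filter, hqD, true_and] at hq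
    have hq₁ := T.isDiag q hqD
    have hq₂ := hnc q hqD
    simp only [IsDiag, Crosses] at hq₁ hq₂
    exact ⟨hqD, by omega⟩
  have hφ : ∀ j k, (j ≤ a ∨ b ≤ j) → (k ≤ a ∨ b ≤ k) → (φ j < φ k ↔ j < k) := by
    intro j k hj hk
    simp only [φ]
    split_ifs <;> omega
  have hinj : Set.InjOn (fun q : ℕ × ℕ => (φ q.1, φ q.2)) Out := by
    intro p hp q hq hpq
    obtain ⟨-, hp1, hp2, -⟩ := hout p hp
    obtain ⟨-, hq1, hq2, -⟩ := hout q hq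
    simp only [Prod.mk.injEq] at hpq
    have := hφ _ _ hp1 hq1; have := hφ _ _ hq1 hp1
    have := hφ _ _ hp2 hq2; have := hφ _ _ hq2 hp2
    exact Prod.ext (by omega) (by omega)
  have himage : IsNoncrossingIn (Out.image fun q => (φ q.1, φ q.2)) 0 (n - (b - a)) := by
    constructor
    · simp only [Finset.mem_image]
      rintro _ ⟨q, hq, rfl⟩
      have := hout q hq
      simp only [φ]
      split_ifs <;> omega
    · simp only [Finset.mem_image]
      rintro _ ⟨p, hp, rfl⟩ _ ⟨q, hq, rfl⟩ hcross
      obtain ⟨hpD, hp1, hp2, -⟩ := hout p hp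
      obtain ⟨hqD, hq1, hq2, -⟩ := hout q hq
      refine T.noncross p hpD q hqD ?_
      simp only [Crosses] at hcross ⊢
      rwa [hφ _ _ hp1 hq1, hφ _ _ hq1 hp2, hφ _ _ hp2 hq2, hφ _ _ hq1 hp1, hφ _ _ hp1 hq2,
        hφ _ _ hq2 hp2] at hcross
  have hclosing : (0, n - (b - a)) ∉ Out.image fun q => (φ q.1, φ q.2) := by
    simp only [Finset.mem_image, Prod.mk.injEq, not_exists, not_and]
    intro q hq h1 h2
    obtain ⟨hqD, hq'⟩ := hout q hq
    have hq0 : q = (0, n - 1) := by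
      simp only [φ] at h1 h2
      split_ifs at h1 h2 <;> exact Prod.ext (by omega) (by omega)
    exact T.zero_last_notMem_diags (hq0 ▸ hqD)
  have := himage.card_erase_le
  rwa [Finset.erase_eq_of_notMem hclosing, Finset.card_image_of_injOn hinj, Nat.sub_zero] at this

/-- The bounds on the diagonals inside and outside `(a, b)` add up to the total `n - 3`, so both
are attained. -/
theorem card_diagsIn_erase {a b : Fin n} (hab : T.graph.Adj a b) (h2 : a.val + 2 ≤ b.val) :
    ((T.diagsIn a b).erase (a, b)).card = b.val - a.val - 2 := by
  have hedge := (T.adj_iff_of_lt (by omega)).1 hab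
  have hle := (T.isNoncrossingIn_diagsIn a b).card_erase_le
  have hnc : ∀ q ∈ T.diags, ¬ Crosses (a.val, b.val) q := by
    intro q hq
    rcases hedge with h | h | h
    · omega
    · have := T.isDiag q hq
      simp only [IsDiag, Crosses] at this ⊢
      omega
    · exact T.noncross _ h q hq
  have hout := T.card_diags_sdiff_diagsIn_le (by omega) b.isLt hnc
  have hsplit : (T.diags \ T.diagsIn a b).card + (T.diagsIn a b).card = n - 3 := by
    rw [Finset.card_sdiff_add_card_eq_card (T.diagsIn_subset _ _), T.card_eq]
  by_cases hmem : (a.val, b.val) ∈ T.diags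
  · have := Finset.card_erase_add_one (s := T.diagsIn a b)
      (Finset.mem_filter.2 ⟨hmem, le_rfl, le_rfl⟩)
    have := T.isDiag _ hmem
    simp only [IsDiag] at this
    omega
  · rw [Finset.erase_eq_of_notMem (s := T.diagsIn a b) fun h => hmem (Finset.mem_filter.1 h).1]
      at hle ⊢
    omega

/-- Take the last neighbour `t` of `a` before `b`. If `t` and `b` were not adjacent, the diagonals
in `[a, b]` would all lie in `[a, t]` or `[t, b]`, one too few for the count above. -/
theorem exists_triangle {a b : Fin n} (hab : T.graph.Adj a b) (h2 : a.val + 2 ≤ b.val) :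
    ∃ t, a < t ∧ t < b ∧ T.graph.Adj a t ∧ T.graph.Adj t b := by
  classical
  set W := (Finset.Ioo a b).filter (T.graph.Adj a)
  have hsucc : (⟨a.val + 1, by omega⟩ : Fin n) ∈ W := by
    simp only [W, Finset.mem_filter, Finset.mem_Ioo, Fin.lt_def]
    exact ⟨⟨by omega, by omega⟩, (T.adj_iff_of_lt (Fin.lt_def.2 (by simp))).2 (Or.inl rfl)⟩
  set t := W.max' ⟨_, hsucc⟩
  obtain ⟨⟨hat, htb⟩, hadj⟩ : (a < t ∧ t < b) ∧ T.graph.Adj a t := by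
    simpa [W] using W.max'_mem ⟨_, hsucc⟩
  refine ⟨t, hat, htb, hadj, ?_⟩
  by_contra htb'
  have hcover : (T.diagsIn a b).erase (a, b) ⊆ T.diagsIn a t ∪ (T.diagsIn t b).erase (t, b) := by
    rintro ⟨s, u⟩ hp
    simp only [diagsIn, Finset.mem_erase, Finset.mem_filter, Finset.mem_union, ne_eq,
      Prod.mk.injEq] at hp ⊢
    obtain ⟨hne, hD, has, hub⟩ := hp
    have := T.isDiag _ hD
    simp only [IsDiag] at this
    have hsu : T.graph.Adj ⟨s, by omega⟩ ⟨u, by omega⟩ := T.adj_of_mem_diags hD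
    by_cases hs : s = a.val
    · subst hs
      have : (⟨u, by omega⟩ : Fin n) ≤ t := W.le_max' _ <| by
        simp only [W, Finset.mem_filter, Finset.mem_Ioo, Fin.lt_def]
        exact ⟨⟨by omega, by omega⟩, hsu⟩
      exact Or.inl ⟨hD, le_rfl, Fin.le_def.1 this⟩
    · have hcross : ¬ (s < t.val ∧ t.val < u) := fun h =>
        T.not_adj_of_crossing (c := ⟨s, by omega⟩) (d := ⟨u, by omega⟩) (Fin.lt_def.2 (by
          simp only; omega)) (Fin.lt_def.2 h.1) (Fin.lt_def.2 h.2) hadj hsu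
      have hne' : ¬ (s = t.val ∧ u = b.val) := by
        rintro ⟨rfl, rfl⟩
        exact htb' hsu
      simp only [hD, true_and]
      omega
  have hcount := T.card_diagsIn_erase hab h2
  have h₁ := (T.isNoncrossingIn_diagsIn a t).card_le
  have h₂ := (T.isNoncrossingIn_diagsIn t b).card_erase_le
  have hbt : b.val ≠ t.val + 1 := fun h => htb' ((T.adj_iff_of_lt htb).2 (Or.inl h))
  have := (Finset.card_le_card hcover).trans (Finset.card_union_le _ _)
  omega

lemma adj_finRotate (hn : 2 ≤ n) (v : Fin n) : T.graph.Adj v (finRotate n v) := by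
  rw [graph, fromRel_adj, val_finRotate, ← Nat.add_one_mod_eq_ite v.isLt]
  refine ⟨fun h => ?_, Or.inl (Or.inl rfl)⟩
  have := congrArg Fin.val h
  rw [val_finRotate] at this
  split_ifs at this <;> omega

/-- Descend through triangles on edges `(a, b)` until `(i, j)` is a side of one of them. -/
lemma exists_adj_adj_of_le {a b : Fin n} (hab : T.graph.Adj a b) (h2 : a.val + 2 ≤ b.val)
    {i j : Fin n} (hij : j.val = i.val + 1) (hai : a ≤ i) (hjb : j ≤ b) :
    ∃ t, T.graph.Adj i t ∧ T.graph.Adj j t := by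
  induction hL : b.val - a.val using Nat.strong_induction_on generalizing a b with
  | _ L ih =>
  obtain ⟨s, has, hsb, has', hsb'⟩ := T.exists_triangle hab h2
  by_cases hjs : j ≤ s
  · by_cases h : a = i ∧ s = j
    · obtain ⟨rfl, rfl⟩ := h
      exact ⟨b, hab, hsb'⟩
    · exact ih _ (by omega) has' (by omega) hai hjs rfl
  · by_cases h : s = i ∧ b = j
    · obtain ⟨rfl, rfl⟩ := h
      exact ⟨a, has'.symm, hab.symm⟩
    · exact ih _ (by omega) hsb' (by omega) (by omega) hjb rfl

theorem exists_adj_adj_finRotate (hn : 3 ≤ n) (v : Fin n) :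
    ∃ t, T.graph.Adj v t ∧ T.graph.Adj (finRotate n v) t := by
  set z : Fin n := ⟨0, by omega⟩
  set l : Fin n := ⟨n - 1, by omega⟩
  have hwrap : T.graph.Adj z l :=
    (T.adj_iff_of_lt (Fin.lt_def.2 (by simp [z, l]; omega))).2 (Or.inr (Or.inl ⟨rfl, rfl⟩))
  have hv := val_finRotate v
  by_cases hlast : v.val + 1 = n
  · obtain ⟨t, -, -, hzt, htl⟩ := T.exists_triangle hwrap (by simp [z, l]; omega)
    rw [if_pos hlast] at hv
    rw [show finRotate n v = z from Fin.ext hv, show v = l from Fin.ext (by simp [l]; omega)]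
    exact ⟨t, htl.symm, hzt⟩
  · rw [if_neg hlast] at hv
    exact T.exists_adj_adj_of_le hwrap (by simp [z, l]; omega) hv (Fin.le_def.2 (Nat.zero_le _))
      (Fin.le_def.2 (by simp only [hv, l]; omega))

/-- The apex of the triangle on the edge from `v` to the farther of `w`, `w'` is a neighbour of
`v` between them that does not cross the edge to the nearer one, so it is the nearer one. -/
theorem adj_of_consecutive {v w w' : Fin n} (hw : T.graph.Adj v w) (hw' : T.graph.Adj v w')
    (hlt : w < w') (hside : v < w ∨ w' < v) (hgap : ∀ u, w < u → u < w' → ¬ T.graph.Adj v u) :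
    T.graph.Adj w w' := by
  rcases hside with hvw | hwv
  · obtain ⟨s, hvs, hsw', hvs', hsw''⟩ := T.exists_triangle hw' (by omega)
    obtain rfl : s = w := by
      rcases lt_trichotomy s w with h | h | h
      · exact absurd hsw'' (T.not_adj_of_crossing hvs h hlt hw)
      · exact h
      · exact absurd hvs' (hgap s h hsw')
    exact hsw''
  · obtain ⟨s, hws, hsv, hws', hsv'⟩ := T.exists_triangle hw.symm (by omega)
    obtain rfl : s = w' := by
      rcases lt_trichotomy s w' with h | h | h
      · exact absurd hsv'.symm (hgap s hws h)
      · exact h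
      · exact absurd hw'.symm (T.not_adj_of_crossing hlt h hsv hws')
    exact hws'

theorem colors_eq_of_fan {c : Fin n → Bool} {v : Fin n} {x y : ℕ}
    (hside : y < v.val ∨ v.val < x)
    (hstep : ∀ p q, T.graph.Adj v p → T.graph.Adj v q → T.graph.Adj p q → p < q →
      x ≤ p.val → q.val ≤ y → c p = c q)
    {u w : Fin n} (hu : T.graph.Adj v u) (hw : T.graph.Adj v w) (hux : x ≤ u.val ∧ u.val ≤ y)
    (hwx : x ≤ w.val ∧ w.val ≤ y) : c u = c w := by
  classical
  set s := Finset.univ.filter fun u => T.graph.Adj v u ∧ x ≤ u.val ∧ u.val ≤ y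
  refine s.apply_eq_of_consecutive c ?_ u (by simp [s, hu, hux]) w (by simp [s, hw, hwx])
  intro p hp q hq hpq hgap
  simp only [s, Finset.mem_filter, Finset.mem_univ, true_and] at hp hq
  refine hstep p q hp.1 hq.1 (T.adj_of_consecutive hp.1 hq.1 hpq (by omega) ?_) hpq hp.2.1 hq.2.2
  intro r hpr hrq hvr
  have hr : r ∈ s := by
    simp only [s, Finset.mem_filter, Finset.mem_univ, true_and]
    exact ⟨hvr, by omega, by omega⟩
  exact hgap r hr ⟨hpr, hrq⟩

def IsSpecial (v : Fin n) : Prop := pdeg T v = 2 ∨ IsCentral T v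

lemma eq_or_eq_of_pdeg_eq_two (hn : 3 ≤ n) {v u : Fin n} (hv : pdeg T v = 2)
    (hu : T.graph.Adj v u) : u = finRotate n v ∨ u = (finRotate n).symm v := by
  set w := (finRotate n).symm v
  have hw : finRotate n w = v := Equiv.apply_symm_apply _ _
  have hne : finRotate n v ≠ w := fun h => by
    have h' := congrArg Fin.val h
    rw [← hw, val_finRotate, val_finRotate] at h'
    have := val_finRotate w
    rw [hw] at this
    split_ifs at h' this <;> omega
  have hsub : {finRotate n v, w} ⊆ T.graph.neighborSet v := by
    rintro x (rfl | rfl)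
    · exact T.adj_finRotate (by omega) v
    · exact (hw ▸ T.adj_finRotate (by omega) w).symm
  have heq := Set.eq_of_subset_of_ncard_le hsub
    (by rw [Set.ncard_pair hne]; exact hv.le) (Set.toFinite _)
  have hu' : u ∈ T.graph.neighborSet v := hu
  rwa [← heq] at hu'

namespace IsSpecial

variable {T} {v : Fin n}

/-- A degree-2 vertex `v` sees `v ± 1` at offsets `1` and `n - 1 ≡ 1 (mod 4)`; a central vertex
sees `v + 1` at offset `1`. -/
theorem cyclicOffset_mod_four (hn4 : n % 4 = 2) (hn : 3 ≤ n) (hv : T.IsSpecial v) {u : Fin n}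
    (hu : T.graph.Adj v u) : cyclicOffset v u % 4 = 1 := by
  rcases hv with hdeg | hcen
  · rcases T.eq_or_eq_of_pdeg_eq_two hn hdeg hu with rfl | rfl
    · rw [cyclicOffset_finRotate (by omega)]
    · have hw := val_finRotate ((finRotate n).symm v)
      rw [Equiv.apply_symm_apply] at hw
      rw [cyclicOffset_eq]
      split_ifs at hw ⊢ <;> omega
  · have := hcen.2 u _ hu (T.adj_finRotate (by omega) v)
    rwa [show (((finRotate n v).val + n - v.val) % n) = 1 from
      cyclicOffset_finRotate (by omega) v] at this

lemma mod_two_ne (hn4 : n % 4 = 2) (hn : 3 ≤ n) (hv : T.IsSpecial v) {u : Fin n}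
    (hu : T.graph.Adj v u) : u.val % 2 ≠ v.val % 2 := by
  have := hv.cyclicOffset_mod_four hn4 hn hu
  rw [cyclicOffset_eq] at this
  split_ifs at this <;> omega

lemma sub_mod_four_eq_zero (hn4 : n % 4 = 2) (hn : 3 ≤ n) (hv : T.IsSpecial v) {p q : Fin n}
    (hp : T.graph.Adj v p) (hq : T.graph.Adj v q) (hside : q < v ∨ v < p) (hpq : p < q) :
    (q.val - p.val) % 4 = 0 := by
  have h₁ := hv.cyclicOffset_mod_four hn4 hn hp
  have h₂ := hv.cyclicOffset_mod_four hn4 hn hq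
  rw [cyclicOffset_eq] at h₁ h₂
  split_ifs at h₁ h₂ <;> omega

/-- The apex `t` of the triangle on the edge `(v, v + 1)` would sit at offsets from `v` and from
`v + 1` that differ by exactly one, yet both are `≡ 1 (mod 4)`. -/
theorem not_finRotate (hn4 : n % 4 = 2) (hn : 3 ≤ n) (hv : T.IsSpecial v) :
    ¬ T.IsSpecial (finRotate n v) := fun hw => by
  obtain ⟨t, hvt, hwt⟩ := T.exists_adj_adj_finRotate hn v
  have h₁ := hv.cyclicOffset_mod_four hn4 hn hvt
  have h₂ := hw.cyclicOffset_mod_four hn4 hn hwt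
  have hne₁ := Fin.val_ne_of_ne hvt.ne
  have hne₂ := Fin.val_ne_of_ne hwt.ne
  have hsucc := val_finRotate v
  rw [cyclicOffset_eq] at h₁ h₂
  split_ifs at h₁ h₂ hsucc <;> omega

lemma not_isSpecial_of_adj (hn4 : n % 4 = 2) (hn : 3 ≤ n)
    (hpar : ∀ u w : Fin n, (T.IsSpecial u ↔ T.IsSpecial w) ↔ u.val % 2 = w.val % 2)
    (hv : T.IsSpecial v) {u : Fin n} (hu : T.graph.Adj v u) : ¬ T.IsSpecial u := fun h =>
  hv.mod_two_ne hn4 hn hu ((hpar u v).1 (iff_of_true h hv))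

theorem colors_eq (hn4 : n % 4 = 2) (hn : 3 ≤ n)
    (hpar : ∀ u w : Fin n, (T.IsSpecial u ↔ T.IsSpecial w) ↔ u.val % 2 = w.val % 2)
    (hv : T.IsSpecial v) {c : Fin n → Bool} {x y : ℕ} (hside : y < v.val ∨ v.val < x)
    (hrule : ∀ p q : Fin n, x ≤ p.val → p < q → q.val ≤ y → T.graph.Adj p q →
      ¬ T.IsSpecial p → ¬ T.IsSpecial q → (q.val - p.val) % 4 = 0 → c p = c q)
    {u w : Fin n} (hu : T.graph.Adj v u) (hw : T.graph.Adj v w) (hux : x ≤ u.val ∧ u.val ≤ y)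
    (hwx : x ≤ w.val ∧ w.val ≤ y) : c u = c w :=
  T.colors_eq_of_fan hside (fun p q hp hq hpq hlt hxp hqy => hrule p q hxp hlt hqy hpq
    (hv.not_isSpecial_of_adj hn4 hn hpar hp) (hv.not_isSpecial_of_adj hn4 hn hpar hq)
    (hv.sub_mod_four_eq_zero hn4 hn hp hq (by omega) hlt)) hu hw hux hwx

end IsSpecial

theorem _root_.IsGenSun.isSpecial_iff_iff {T : PolyTriangulation n} (hs : IsGenSun T)
    (hn : 3 ≤ n) (u v : Fin n) :
    (T.IsSpecial u ↔ T.IsSpecial v) ↔ u.val % 2 = v.val % 2 := by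
  have hdisj : Disjoint {v | pdeg T v = 2} {v | IsCentral T v} :=
    Set.disjoint_left.2 fun v hdeg hcen => hcen.1 v (Or.inl rfl) hdeg
  have hcard : 2 * {v | T.IsSpecial v}.ncard = n := by
    change 2 * ({v | pdeg T v = 2} ∪ {v | IsCentral T v}).ncard = n
    rw [Set.ncard_union_eq hdisj, hs.2]
    have := hs.1
    omega
  exact mem_iff_mem_iff_mod_two_eq (S := {v | T.IsSpecial v})
    (fun v hv => hv.not_finRotate hs.1 hn) hcard u v

/-- Induction on `b - a` through the apex `t` of the triangle on `(a, b)`. A non-special apex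
splits `(a, b)` into two shorter diagonals. A special apex has all its neighbours in `[a, b]`,
at offsets `≡ 1 (mod 4)`; those on each side are coloured alike, so `a` and `b` differ. -/
theorem color_eq_iff (hn4 : n % 4 = 2) (hn : 3 ≤ n)
    (hpar : ∀ u w : Fin n, (T.IsSpecial u ↔ T.IsSpecial w) ↔ u.val % 2 = w.val % 2)
    {c : Fin n → Bool} (hc : ∀ v, T.IsSpecial v → T.graph.SeesBothColors c v)
    {a b : Fin n} (hab : a < b) (hadj : T.graph.Adj a b) (ha : ¬ T.IsSpecial a)
    (hb : ¬ T.IsSpecial b) : c a = c b ↔ (b.val - a.val) % 4 = 0 := by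
  induction hL : b.val - a.val using Nat.strong_induction_on generalizing a b with
  | _ L ih =>
  have hpab := (hpar a b).1 (iff_of_false ha hb)
  obtain ⟨t, hat, htb, hat', htb'⟩ := T.exists_triangle hadj (by omega)
  by_cases ht : T.IsSpecial t
  · have hrule : ∀ x y : ℕ, y - x < L → ∀ p q : Fin n, x ≤ p.val → p < q → q.val ≤ y →
        T.graph.Adj p q → ¬ T.IsSpecial p → ¬ T.IsSpecial q → (q.val - p.val) % 4 = 0 →
        c p = c q :=
      fun x y hxy p q hxp hpq hqy hadj' hp hq hmod =>
        (ih _ (by omega) hpq hadj' hp hq rfl).2 hmod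
    have hside : ∀ u, T.graph.Adj t u → (a.val ≤ u.val ∧ u.val ≤ t.val - 1) ∨
        (t.val + 1 ≤ u.val ∧ u.val ≤ b.val) := by
      intro u hu
      have hne := Fin.val_ne_of_ne hu.ne
      have hau : ¬ u < a := fun h => T.not_adj_of_crossing h hat htb hu.symm hadj
      have hub : ¬ b < u := fun h => T.not_adj_of_crossing hat htb h hadj hu
      omega
    have hcol : c a ≠ c b := by
      intro hcab
      obtain ⟨u, w, hu, hw, hne⟩ := (hc t ht).exists_adj_adj_ne
      have hcol_a : ∀ u, T.graph.Adj t u → c u = c a := by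
        intro u hu
        rcases hside u hu with h | h
        · exact ht.colors_eq hn4 hn hpar (Or.inl (by omega)) (hrule _ _ (by omega)) hu hat'.symm
            h ⟨le_rfl, by omega⟩
        · exact hcab ▸ ht.colors_eq hn4 hn hpar (Or.inr (by omega)) (hrule _ _ (by omega)) hu htb'
            h ⟨by omega, le_rfl⟩
      exact hne ((hcol_a u hu).trans (hcol_a w hw).symm)
    have h₁ := ht.cyclicOffset_mod_four hn4 hn hat'.symm
    have h₂ := ht.cyclicOffset_mod_four hn4 hn htb'
    rw [cyclicOffset_eq, if_neg (by omega)] at h₁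
    rw [cyclicOffset_eq, if_pos (by omega)] at h₂
    simp only [hcol, false_iff]
    omega
  · have hpat := (hpar a t).1 (iff_of_false ha ht)
    have key : ∀ x y z : Bool, x = z ↔ (x = y ↔ y = z) := by decide
    rw [key (c a) (c t) (c b), ih _ (by omega) hat hat' ha ht rfl,
      ih _ (by omega) htb htb' ht hb rfl]
    omega

/-- One of `0` and `n - 1` is special, as their parities differ, and all its neighbours lie on
one side of it. -/
theorem false_of_seesBothColors (hs : IsGenSun T) (hn : 3 ≤ n) {c : Fin n → Bool}
    (hc : ∀ v, T.IsSpecial v → T.graph.SeesBothColors c v) : False := by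
  have hpar := hs.isSpecial_iff_iff hn
  obtain ⟨v, x, y, hv, hside, hrange⟩ : ∃ v : Fin n, ∃ x y : ℕ, T.IsSpecial v ∧
      (y < v.val ∨ v.val < x) ∧ ∀ u, T.graph.Adj v u → x ≤ u.val ∧ u.val ≤ y := by
    by_cases h0 : T.IsSpecial ⟨0, by omega⟩
    · refine ⟨_, 1, n - 1, h0, Or.inr (by simp), fun u hu => ?_⟩
      have := Fin.val_ne_of_ne hu.ne
      simp only at this
      omega
    · have := hs.1
      have hl : T.IsSpecial ⟨n - 1, by omega⟩ := by
        by_contra hl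
        exact absurd ((hpar _ _).1 (iff_of_false h0 hl)) (by simp only; omega)
      refine ⟨_, 0, n - 2, hl, Or.inl (by simp only; omega), fun u hu => ?_⟩
      have := Fin.val_ne_of_ne hu.ne
      simp only at this
      omega
  obtain ⟨u, w, hu, hw, hne⟩ := (hc v hv).exists_adj_adj_ne
  exact hne (hv.colors_eq hs.1 hn hpar hside (fun p q _ hpq _ hadj hp hq hmod =>
    (T.color_eq_iff hs.1 hn hpar hc hpq hadj hp hq).2 hmod) hu hw (hrange u hu) (hrange w hw))

/-- Each vertex has a single neighbour, and vertex `0` is central. -/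
theorem false_of_seesBothColors_two (T : PolyTriangulation 2) {c : Fin 2 → Bool}
    (hc : ∀ v, T.IsSpecial v → T.graph.SeesBothColors c v) : False := by
  have hunique : ∀ {v u w : Fin 2}, T.graph.Adj v u → T.graph.Adj v w → u = w :=
    fun hu hw => Fin.ext (by have := Fin.val_ne_of_ne hu.ne; have := Fin.val_ne_of_ne hw.ne; omega)
  have hdeg : ∀ v, pdeg T v ≤ 1 := fun v => (Set.ncard_le_one_iff (Set.toFinite _)).2 hunique
  have hcen : IsCentral T 0 :=
    ⟨fun u _ => by have := hdeg u; omega, fun u w hu hw => by rw [hunique hu hw]⟩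
  obtain ⟨u, w, hu, hw, hne⟩ := (hc 0 (Or.inr hcen)).exists_adj_adj_ne
  exact hne (by rw [hunique hu hw])

theorem not_exists_seesBothColors (hs : IsGenSun T) :
    ¬ ∃ c : Fin n → Bool, ∀ v, T.IsSpecial v → T.graph.SeesBothColors c v := by
  rintro ⟨c, hc⟩
  obtain rfl | hn : n = 2 ∨ 3 ≤ n := by have := hs.1; omega
  · exact false_of_seesBothColors_two T hc
  · exact T.false_of_seesBothColors hs hn hc

end PolyTriangulation

/-- no generalized sun graph has two disjoint total dominating sets;
stronger form: there is no 2-coloring of the vertices such that every degree-2 vertex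
and every central vertex sees both colors in its neighborhood. -/
theorem stmt10 (n : ℕ) (T : PolyTriangulation n) (hs : IsGenSun T) :
    (¬ HasTwoTDS T.graph) ∧
    ¬ ∃ c : Fin n → Bool, ∀ v : Fin n, (pdeg T v = 2 ∨ IsCentral T v) →
        (∃ u, T.graph.Adj v u ∧ c u = true) ∧ (∃ u, T.graph.Adj v u ∧ c u = false) := by
  have hcol := T.not_exists_seesBothColors hs
  refine ⟨fun h => hcol ?_, hcol⟩
  obtain ⟨c, hc⟩ := h.exists_seesBothColors
  exact ⟨c, fun v _ => hc v⟩
end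

section
/- In a generalized sun graph, every second vertex along the outer Hamiltonian cycle is either a central vertex or a vertex of degree 2; that is, the degree-2 vertices and central vertices can be indexed so that they occupy exactly the odd positions along the Hamiltonian cycle. -/
open SimpleGraph

/-!
Let `A` be the set of vertices that have degree 2 or are central. The counting hypothesis says
`|A| = n / 2`, so it suffices that no two cyclically consecutive vertices `v, v + 1` lie in `A`:
a set of half the vertices of an even cycle with that property alternates.

The boundary edge `v (v + 1)` lies in a triangle `v (v + 1) k`, because `n - 3` pairwise
non-crossing diagonals triangulate the polygon. Two consecutive degree-2 vertices would force
`k = v - 1 = v + 2`, i.e. `n = 3`. A central vertex has no degree-2 neighbour. If `v` and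
`v + 1` were both central, the index `j` of `k` seen from `v` would satisfy `j ≡ 1 (mod 4)`
(the index of `v + 1`), while seen from `v + 1` it would satisfy `j - 1 ≡ n - 1 ≡ 1 (mod 4)`
(the index of `v`), as `n ≡ 2 (mod 4)`.
-/

section CyclicIndex

variable {n : ℕ}

lemma Fin.val_add_sub_mod_eq (u v : Fin n) : (u.val + n - v.val) % n = (u - v).val := by
  rw [Fin.val_sub]
  congr 1
  omega

variable [NeZero n]

lemma Fin.val_one_of_two_le (hn : 2 ≤ n) : (1 : Fin n).val = 1 := by
  rw [Fin.val_one', Nat.mod_eq_of_lt hn]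

lemma Fin.val_neg_one_of_two_le (hn : 2 ≤ n) : (-1 : Fin n).val = n - 1 := by
  rw [Fin.val_neg', Fin.val_one_of_two_le hn, Nat.mod_eq_of_lt (by omega)]

lemma Fin.val_sub_add_one {k v : Fin n} (h : k ≠ v) : (k - (v + 1)).val = (k - v).val - 1 := by
  rw [← sub_sub, Fin.val_sub_one_of_ne_zero (sub_ne_zero.2 h)]

lemma Fin.exists_forall_mem_iff_odd {A : Set (Fin n)} (hA : ∀ x, x ∈ A ↔ x + 1 ∉ A) :
    ∃ s, ∀ v, v ∈ A ↔ (v - s).val % 2 = 1 := by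
  obtain ⟨s, hs⟩ : ∃ s, s ∉ A := by
    by_cases h : (0 : Fin n) ∈ A
    exacts [⟨1, by simpa using (hA 0).1 h⟩, ⟨0, h⟩]
  refine ⟨s, fun v => ?_⟩
  induction hj : (v - s).val generalizing v with
  | zero =>
    obtain rfl : v = s := sub_eq_zero.1 (Fin.ext hj)
    simpa using hs
  | succ j ih =>
    have hne : v - s ≠ 0 := fun h => by simp [h] at hj
    have hprev := ih (v - 1) (by rw [sub_right_comm, Fin.val_sub_one_of_ne_zero hne, hj]; rfl)
    have hstep := hA (v - 1)
    rw [sub_add_cancel, hprev] at hstep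
    rw [← not_iff_not, ← hstep]
    omega

end CyclicIndex

lemma Set.mem_iff_add_notMem_of_two_mul_ncard {G : Type*} [AddGroup G] [Finite G] {A : Set G}
    {g : G} (hA : ∀ x ∈ A, x + g ∉ A) (hcard : 2 * A.ncard = Nat.card G) (x : G) :
    x ∈ A ↔ x + g ∉ A := by
  refine ⟨hA x, fun hx => ?_⟩
  have hdisj : Disjoint A ((· + g) '' A) := by
    rw [Set.disjoint_left]
    rintro _ hy ⟨z, hz, rfl⟩
    exact hA z hz hy
  have hunion : A ∪ (· + g) '' A = Set.univ := by
    refine Set.eq_of_subset_of_ncard_le (Set.subset_univ _) ?_ (Set.toFinite _)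
    rw [Set.ncard_univ, Set.ncard_union_eq hdisj,
      Set.ncard_image_of_injective _ (add_left_injective g)]
    omega
  have : x + g ∈ A ∪ (· + g) '' A := hunion ▸ Set.mem_univ _
  rcases this with h | ⟨y, hy, hyx⟩
  · exact absurd h hx
  · rwa [← add_right_cancel hyx]

namespace PolyTriangulation

variable {n : ℕ} (T : PolyTriangulation n)

def NatAdj (x y : ℕ) : Prop :=
  ∃ (hx : x < n) (hy : y < n), T.graph.Adj ⟨x, hx⟩ ⟨y, hy⟩

variable {T}

lemma natAdj_val_iff {u v : Fin n} : T.NatAdj u.val v.val ↔ T.graph.Adj u v :=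
  ⟨fun ⟨_, _, h⟩ => h, fun h => ⟨u.isLt, v.isLt, h⟩⟩

lemma NatAdj.symm {x y : ℕ} (h : T.NatAdj x y) : T.NatAdj y x :=
  let ⟨hx, hy, h⟩ := h; ⟨hy, hx, h.symm⟩

lemma natAdj_of_mem_diags {p : ℕ × ℕ} (hp : p ∈ T.diags) : T.NatAdj p.1 p.2 := by
  obtain ⟨h12, h2, -, -⟩ := T.isDiag p hp
  refine ⟨h12.trans h2, h2, ?_⟩
  rw [graph, fromRel_adj]
  refine ⟨by simp [Fin.ext_iff, h12.ne], Or.inl (Or.inr ?_)⟩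
  simpa [min_eq_left h12.le, max_eq_right h12.le] using hp

lemma natAdj_succ {x : ℕ} (hx : x + 1 < n) : T.NatAdj x (x + 1) := by
  refine ⟨by omega, hx, ?_⟩
  rw [graph, fromRel_adj]
  exact ⟨by simp [Fin.ext_iff], Or.inl (Or.inl (Nat.mod_eq_of_lt hx))⟩

lemma natAdj_zero_sub_one (hn : 2 ≤ n) : T.NatAdj 0 (n - 1) := by
  refine ⟨by omega, by omega, ?_⟩
  rw [graph, fromRel_adj]
  refine ⟨by simp [Fin.ext_iff]; omega, Or.inr (Or.inl ?_)⟩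
  simp [Nat.sub_add_cancel (by omega : 1 ≤ n)]

lemma disjoint_diagsIn (a k b : ℕ) : Disjoint (T.diagsIn a k) (T.diagsIn k b) := by
  refine Finset.disjoint_left.2 fun p hp hp' => ?_
  simp only [diagsIn, Finset.mem_filter] at hp hp'
  have := (T.isDiag p hp.1).1
  omega

lemma diagsIn_eq_empty {a : ℕ} : T.diagsIn a (a + 1) = ∅ :=
  Finset.filter_false_of_mem fun p hp h => by
    have := (T.isDiag p hp).2.2.1
    omega

/-- The diagonals strictly inside `[a, b]` split at the last neighbour `k` of `a` before `b`;
any diagonal straddling `k` would cross `(a, k)` or contradict the maximality of `k`. -/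
lemma exists_erase_diagsIn_eq_union {a b : ℕ} (hab : a + 2 ≤ b) :
    ∃ k, a < k ∧ k < b ∧ (k = a + 1 ∨ (a, k) ∈ T.diags) ∧
      (T.diagsIn a b).erase (a, b) = T.diagsIn a k ∪ T.diagsIn k b := by
  classical
  let P : ℕ → Prop := fun x => a < x ∧ (x = a + 1 ∨ (a, x) ∈ T.diags)
  have hP : P (a + 1) := ⟨by omega, Or.inl rfl⟩
  set k := Nat.findGreatest P (b - 1)
  have hk : P k := Nat.findGreatest_spec (m := a + 1) (by omega) hP
  have hak1 : a + 1 ≤ k := Nat.le_findGreatest (by omega) hP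
  have hkb : k ≤ b - 1 := Nat.findGreatest_le _
  refine ⟨k, hk.1, by omega, hk.2, ?_⟩
  ext p
  simp only [Finset.mem_erase, Finset.mem_union, diagsIn, Finset.mem_filter]
  constructor
  · rintro ⟨hne, hp, hap, hpb⟩
    suffices p.2 ≤ k ∨ k ≤ p.1 by
      rcases this with h | h
      exacts [Or.inl ⟨hp, hap, h⟩, Or.inr ⟨hp, h, hpb⟩]
    by_contra! ⟨hkp2, hp1k⟩
    rcases Nat.eq_or_lt_of_le hap with hap | hap
    · have hp2 : p.2 ≤ b - 1 := by
        rcases Nat.eq_or_lt_of_le hpb with h | h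
        · exact absurd (Prod.ext hap.symm h) hne
        · omega
      have : p.2 ≤ k := Nat.le_findGreatest hp2 ⟨by omega, Or.inr (by rw [hap]; exact hp)⟩
      omega
    · have hak : (a, k) ∈ T.diags := hk.2.resolve_left (by omega)
      exact T.noncross _ hak _ hp (Or.inl ⟨hap, hp1k, hkp2⟩)
  · rintro (⟨hp, hap, hpk⟩ | ⟨hp, hkp, hpb⟩)
    · exact ⟨ne_of_apply_ne Prod.snd (show p.2 ≠ b by omega), hp, hap, by omega⟩
    · exact ⟨ne_of_apply_ne Prod.fst (show p.1 ≠ a by omega), hp, by omega, hpb⟩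

lemma exists_card_erase_diagsIn_eq {a b : ℕ} (hab : a + 2 ≤ b) :
    ∃ k, a < k ∧ k < b ∧ (k = a + 1 ∨ (a, k) ∈ T.diags) ∧
      ((T.diagsIn a b).erase (a, b)).card = (T.diagsIn a k).card + (T.diagsIn k b).card := by
  obtain ⟨k, hak, hkb, hk, hsplit⟩ := T.exists_erase_diagsIn_eq_union hab
  exact ⟨k, hak, hkb, hk, by rw [hsplit, Finset.card_union_of_disjoint (disjoint_diagsIn a k b)]⟩

lemma card_diagsIn_lt {a b : ℕ} (hab : a < b) : (T.diagsIn a b).card < b - a := by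
  induction hd : b - a using Nat.strong_induction_on generalizing a b with
  | _ d ih =>
    rcases Nat.eq_or_lt_of_le hab with rfl | hab
    · rw [diagsIn_eq_empty, Finset.card_empty]
      omega
    · obtain ⟨k, hak, hkb, -, hcard⟩ := T.exists_card_erase_diagsIn_eq hab
      have hleft := ih (k - a) (by omega) hak rfl
      have hright := ih (b - k) (by omega) hkb rfl
      have := Finset.pred_card_le_card_erase (s := T.diagsIn a b) (a := (a, b))
      omega

lemma card_erase_diagsIn_add_two_le {a b : ℕ} (hab : a + 2 ≤ b) :
    ((T.diagsIn a b).erase (a, b)).card + 2 ≤ b - a := by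
  obtain ⟨k, hak, hkb, -, hcard⟩ := T.exists_card_erase_diagsIn_eq hab
  have := T.card_diagsIn_lt hak
  have := T.card_diagsIn_lt hkb
  omega

variable (T) in
/-- The sub-polygon on `a, …, b` is triangulated by the diagonals of `T`: it carries the
maximal number `b - a - 2` of diagonals strictly inside it. -/
def IsFull (a b : ℕ) : Prop :=
  ((T.diagsIn a b).erase (a, b)).card + 2 = b - a

lemma isFull_zero_sub_one (hn : 3 ≤ n) : T.IsFull 0 (n - 1) := by
  have hall : (T.diagsIn 0 (n - 1)).erase (0, n - 1) = T.diags := by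
    refine (Finset.erase_eq_of_notMem fun h => ?_).trans (Finset.filter_true_of_mem fun p hp => ?_)
    · have := (T.isDiag _ (Finset.mem_filter.1 h).1).2.2.2
      omega
    · have := (T.isDiag p hp).2.1
      omega
  rw [IsFull, hall, T.card_eq]
  omega

lemma natAdj_of_eq_succ_or_mem_diags {a b : ℕ} (hb : b < n) (h : b = a + 1 ∨ (a, b) ∈ T.diags) :
    T.NatAdj a b := by
  rcases h with rfl | h
  exacts [natAdj_succ hb, natAdj_of_mem_diags h]

lemma isFull_of_mem_diags {a b : ℕ} (hab : (a, b) ∈ T.diags)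
    (hcard : (T.diagsIn a b).card + 1 = b - a) : T.IsFull a b := by
  have : (a, b) ∈ T.diagsIn a b := Finset.mem_filter.2 ⟨hab, le_rfl, le_rfl⟩
  have := Finset.card_erase_add_one this
  unfold IsFull
  omega

lemma IsFull.exists_split {a b : ℕ} (h : T.IsFull a b) (hb : b < n) :
    ∃ k, a < k ∧ k < b ∧ T.NatAdj a k ∧ T.NatAdj k b ∧
      (k = a + 1 ∨ T.IsFull a k) ∧ (b = k + 1 ∨ T.IsFull k b) := by
  unfold IsFull at h
  obtain ⟨k, hak, hkb, hk, hcard⟩ := T.exists_card_erase_diagsIn_eq (a := a) (b := b) (by omega)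
  have hleft := T.card_diagsIn_lt hak
  have hright := T.card_diagsIn_lt hkb
  have hk' : b = k + 1 ∨ (k, b) ∈ T.diags := by
    by_contra! ⟨hsucc, hnot⟩
    have := T.card_erase_diagsIn_add_two_le (a := k) (b := b) (by omega)
    rw [Finset.erase_eq_of_notMem (by simpa [diagsIn] using hnot)] at this
    omega
  refine ⟨k, hak, hkb, natAdj_of_eq_succ_or_mem_diags (by omega) hk,
    natAdj_of_eq_succ_or_mem_diags hb hk', hk.imp_right fun hak' => ?_,
    hk'.imp_right fun hkb' => ?_⟩
  · exact isFull_of_mem_diags hak' (by omega)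
  · exact isFull_of_mem_diags hkb' (by omega)

lemma IsFull.exists_natAdj_natAdj {a b : ℕ} (h : T.IsFull a b) (hb : b < n) (hab : T.NatAdj a b)
    {i : ℕ} (hai : a ≤ i) (hib : i + 1 ≤ b) : ∃ k, T.NatAdj i k ∧ T.NatAdj (i + 1) k := by
  induction hd : b - a using Nat.strong_induction_on generalizing a b with
  | _ d ih =>
    obtain ⟨k, hak, hkb, hadj_ak, hadj_kb, hleft, hright⟩ := h.exists_split hb
    rcases Nat.lt_or_ge i k with hik | hki
    · rcases hleft with rfl | hleft
      · obtain rfl : i = a := by omega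
        exact ⟨b, hab, hadj_kb⟩
      · exact ih (k - a) (by omega) hleft (by omega) hadj_ak hai (by omega) rfl
    · rcases hright with rfl | hright
      · obtain rfl : i = k := by omega
        exact ⟨a, hadj_ak.symm, hab.symm⟩
      · exact ih (b - k) (by omega) hright hb hadj_kb hki hib rfl

variable (T) in
lemma pdeg_lt (u : Fin n) : pdeg T u < n := by
  have hsub : T.graph.neighborSet u ⊂ Set.univ :=
    Set.ssubset_univ_iff.2 fun h => T.graph.irrefl (h ▸ Set.mem_univ u : u ∈ T.graph.neighborSet u)
  simpa [pdeg] using Set.ncard_lt_ncard hsub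

lemma isCentral_of_two (T : PolyTriangulation 2) (v : Fin 2) : IsCentral T v := by
  refine ⟨fun u _ => (pdeg_lt T u).ne, fun u w hu hw => ?_⟩
  have := hu.ne
  have := hw.ne
  obtain rfl : u = w := by omega
  rfl

section Cycle

variable [NeZero n]

variable (T) in
lemma adj_add_one (hn : 2 ≤ n) (v : Fin n) : T.graph.Adj v (v + 1) := by
  have hone := Fin.val_one_of_two_le hn
  rw [graph, fromRel_adj]
  refine ⟨fun h => ?_, Or.inl (Or.inl (by rw [Fin.val_add, hone]))⟩
  have := congrArg Fin.val (left_eq_add.1 h)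
  rw [hone, Fin.val_zero] at this
  omega

variable (T) in
lemma exists_adj_adj (hn : 3 ≤ n) (v : Fin n) : ∃ k, T.graph.Adj v k ∧ T.graph.Adj (v + 1) k := by
  have hfull := T.isFull_zero_sub_one hn
  by_cases hv : v.val + 1 < n
  · obtain ⟨k, hvk, hv1k⟩ := hfull.exists_natAdj_natAdj (by omega) (natAdj_zero_sub_one (by omega))
      (Nat.zero_le v.val) (by omega)
    rw [← Fin.val_add_one_of_lt' hv] at hv1k
    exact ⟨⟨k, hvk.2.1⟩, natAdj_val_iff.1 hvk, natAdj_val_iff.1 hv1k⟩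
  · obtain ⟨k, -, hk, h0k, hklast, -, -⟩ := hfull.exists_split (by omega)
    have hvlast : v.val = n - 1 := by omega
    have hv1 : (v + 1).val = 0 := by
      rw [Fin.val_add, Fin.val_one_of_two_le (by omega), hvlast, Nat.sub_add_cancel (by omega),
        Nat.mod_self]
    refine ⟨⟨k, by omega⟩, natAdj_val_iff.1 ?_, natAdj_val_iff.1 ?_⟩
    · rw [hvlast]; exact hklast.symm
    · rw [hv1]; exact h0k

lemma neighborSet_eq_of_pdeg_eq_two (hn : 3 ≤ n) {v : Fin n} (h : pdeg T v = 2) :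
    T.graph.neighborSet v = {v - 1, v + 1} := by
  have hne : v - 1 ≠ v + 1 := fun heq => by
    have := congrArg (fun x => (x - v).val) heq
    simp only [sub_sub_cancel_left, add_sub_cancel_left,
      Fin.val_neg_one_of_two_le (by omega : 2 ≤ n), Fin.val_one_of_two_le (by omega : 2 ≤ n)] at this
    omega
  refine (Set.eq_of_subset_of_ncard_le ?_ ?_ (Set.toFinite _)).symm
  · rintro _ (rfl | rfl)
    · simpa using (T.adj_add_one (by omega) (v - 1)).symm
    · exact T.adj_add_one (by omega) v
  · rw [Set.ncard_pair hne]
    exact h.le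

lemma pdeg_add_one_ne_two (hn : 4 ≤ n) {v : Fin n} (hv : pdeg T v = 2) : pdeg T (v + 1) ≠ 2 := by
  intro hv1
  obtain ⟨k, hvk, hv1k⟩ := T.exists_adj_adj (by omega) v
  have hk : k = v - 1 := by
    have : k ∈ T.graph.neighborSet v := hvk
    rw [neighborSet_eq_of_pdeg_eq_two (by omega) hv] at this
    exact this.resolve_right hv1k.ne'
  have hk' : k = v + 1 + 1 := by
    have : k ∈ T.graph.neighborSet (v + 1) := hv1k
    rw [neighborSet_eq_of_pdeg_eq_two (by omega) hv1, add_sub_cancel_right] at this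
    exact this.resolve_left hvk.ne'
  have := Fin.val_sub_add_one hvk.ne'
  rw [hk', add_sub_cancel_left, Fin.val_one_of_two_le (by omega), ← hk', hk, sub_sub_cancel_left,
    Fin.val_neg_one_of_two_le (by omega)] at this
  omega

lemma not_isCentral_add_one (hn : 3 ≤ n) (hmod : n % 4 = 2) {v : Fin n}
    (hv : IsCentral T v) : ¬ IsCentral T (v + 1) := by
  intro hv1
  obtain ⟨k, hvk, hv1k⟩ := T.exists_adj_adj hn v
  have hadj := T.adj_add_one (by omega) v
  have h1 := hv.2 k (v + 1) hvk hadj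
  have h2 := hv1.2 k v hv1k hadj.symm
  simp only [Fin.val_add_sub_mod_eq] at h1 h2
  rw [add_sub_cancel_left, Fin.val_one_of_two_le (by omega)] at h1
  rw [Fin.val_sub_add_one hvk.ne', sub_add_cancel_left, Fin.val_neg_one_of_two_le (by omega)] at h2
  have : (k - v).val ≠ 0 := fun h => hvk.ne' (sub_eq_zero.1 (Fin.ext h))
  omega

lemma not_pdeg_eq_two_or_isCentral_add_one (hn : 4 ≤ n) (hmod : n % 4 = 2) {v : Fin n}
    (hv : pdeg T v = 2 ∨ IsCentral T v) : ¬ (pdeg T (v + 1) = 2 ∨ IsCentral T (v + 1)) := by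
  have hadj := T.adj_add_one (by omega) v
  rintro (hv1 | hv1) <;> rcases hv with hv | hv
  · exact pdeg_add_one_ne_two hn hv hv1
  · exact hv.1 _ (Or.inr hadj) hv1
  · exact hv1.1 _ (Or.inr hadj.symm) hv
  · exact not_isCentral_add_one (by omega) hmod hv hv1

end Cycle

end PolyTriangulation

open PolyTriangulation

lemma not_isGenSun_two (T : PolyTriangulation 2) : ¬ IsGenSun T := by
  rintro ⟨-, hcount⟩
  have : {v | IsCentral T v} = Set.univ := Set.eq_univ_of_forall (isCentral_of_two T)
  rw [this, Set.ncard_univ, Nat.card_fin] at hcount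
  omega

lemma IsGenSun.two_mul_ncard {n : ℕ} {T : PolyTriangulation n} (hs : IsGenSun T) :
    2 * {v | pdeg T v = 2 ∨ IsCentral T v}.ncard = n := by
  obtain ⟨hmod, hcount⟩ := hs
  have hdisj : Disjoint {v : Fin n | pdeg T v = 2} {v | IsCentral T v} :=
    Set.disjoint_left.2 fun v hdeg hc => hc.1 v (Or.inl rfl) hdeg
  rw [Set.ofPred_or, Set.ncard_union_eq hdisj, hcount]
  omega

/-- in a generalized sun graph, the degree-2 vertices and central
vertices occupy exactly every second position along the outer Hamiltonian cycle:
for some starting vertex `s`, a vertex is of degree 2 or central iff its cyclic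
index relative to `s` is odd. -/
theorem stmt11 (n : ℕ) (T : PolyTriangulation n) (hs : IsGenSun T) :
    ∃ s : Fin n, ∀ v : Fin n,
      (pdeg T v = 2 ∨ IsCentral T v) ↔ ((v.val + n - s.val) % n) % 2 = 1 := by
  obtain rfl | hn : n = 2 ∨ 4 ≤ n := by have := hs.1; omega
  · exact absurd hs (not_isGenSun_two T)
  have : NeZero n := ⟨by omega⟩
  have halt : ∀ v, v ∈ {v | pdeg T v = 2 ∨ IsCentral T v} ↔
      v + 1 ∉ {v | pdeg T v = 2 ∨ IsCentral T v} :=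
    Set.mem_iff_add_notMem_of_two_mul_ncard
      (fun _ hv => not_pdeg_eq_two_or_isCentral_add_one hn hs.1 hv)
      (by rw [Nat.card_fin]; exact hs.two_mul_ncard)
  obtain ⟨s, hsA⟩ := Fin.exists_forall_mem_iff_odd halt
  exact ⟨s, fun v => by rw [Fin.val_add_sub_mod_eq]; exact hsA v⟩
end
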